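/- (Lemma 1) For any vector a ∈ ℝ^K of nonnegative numbers and any permutation π of {1,…,K}, wowa_{(v,p)}(a) ≥ f_π(a), where f_π(a) = Σ_{j=1}^K ω_j^π a_{π(j)} with ω_j^π = w*(Σ_{i≤j} p_{π(i)}) − w*(Σ_{i<j} p_{π(i)}). That is, among all permutations, the nonincreasing ordering of a maximizes the WOWA-type weighted sum. -/

import Mathlib

/-!
Since `w*` is concave, the set function `S ↦ w*(∑_{i ∈ S} p i)` is submodular. Hence for any
ordering `π`, the `π`-weights summed over any set `S` of positions are at most `w*(∑_{S} p)`,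
with equality when `S` is an initial segment of the ordering. Comparing the weights of `π` and
of the sorting permutation `σ` along the initial segments of `σ` and summing by parts against the
nonincreasing, nonnegative values `a (σ k)` gives the inequality.
-/

open Finset

/-- The piecewise linear function `w*` induced by the weight vector `v`:
`w*(0)=0`, `w*(j/K) = ∑_{i≤j} v i`, linear on each `[(j-1)/K, j/K]`. -/
noncomputable def wstar (K : ℕ) (v : Fin K → ℝ) (t : ℝ) : ℝ :=
  ∑ i : Fin K, v i * min 1 (max 0 (t * (K : ℝ) - (i.1 : ℝ)))

/-- The WOWA weight `ω_j = w*(∑_{i≤j} p_{σ(i)}) - w*(∑_{i<j} p_{σ(i)})`. -/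
noncomputable def wowaWeight (K : ℕ) (v p : Fin K → ℝ) (σ : Equiv.Perm (Fin K))
    (j : Fin K) : ℝ :=
  wstar K v (∑ i ∈ Finset.Iic j, p (σ i)) - wstar K v (∑ i ∈ Finset.Iio j, p (σ i))

/-- The WOWA aggregation of `a` relative to a permutation `σ`
(sorting `a` nonincreasingly gives the WOWA value). -/
noncomputable def wowaW (K : ℕ) (v p : Fin K → ℝ) (σ : Equiv.Perm (Fin K))
    (a : Fin K → ℝ) : ℝ :=
  ∑ j : Fin K, wowaWeight K v p σ j * a (σ j)

/-- Concavity on `[0, ∞)`, stated through increments. -/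
def DecreasingIncrements (F : ℝ → ℝ) : Prop :=
  ∀ ⦃x y h : ℝ⦄, 0 ≤ y → y ≤ x → 0 ≤ h → F (x + h) - F x ≤ F (y + h) - F y

section GreedyWeight

variable {ι : Type*} [LinearOrder ι] [LocallyFiniteOrderBot ι] (F : ℝ → ℝ) (q : ι → ℝ)

noncomputable def greedyWeight (j : ι) : ℝ :=
  F (∑ i ∈ Iic j, q i) - F (∑ i ∈ Iio j, q i)

variable {F q}

theorem sum_greedyWeight_le (hF0 : F 0 = 0) (hF : DecreasingIncrements F)
    (hq : ∀ i, 0 ≤ q i) (S : Finset ι) :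
    ∑ j ∈ S, greedyWeight F q j ≤ F (∑ j ∈ S, q j) := by
  induction S using Finset.induction_on_max with
  | empty => simp [hF0]
  | insert m S hlt ih =>
    have hm : m ∉ S := fun h => lt_irrefl m (hlt m h)
    have hle : ∑ j ∈ S, q j ≤ ∑ j ∈ Iio m, q j :=
      sum_le_sum_of_subset_of_nonneg (fun j hj => mem_Iio.2 (hlt j hj)) fun j _ _ => hq j
    have hinc := hF (sum_nonneg fun j _ => hq j) hle (hq m)
    rw [sum_insert hm, sum_insert hm, greedyWeight, ← Iio_insert, sum_insert notMem_Iio_self,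
      add_comm (q m), add_comm (q m)]
    linarith

theorem sum_greedyWeight_of_isLowerSet (hF0 : F 0 = 0) {S : Finset ι}
    (hS : IsLowerSet (S : Set ι)) :
    ∑ j ∈ S, greedyWeight F q j = F (∑ j ∈ S, q j) := by
  induction S using Finset.induction_on_max with
  | empty => simp [hF0]
  | insert m S hlt ih =>
    have hm : m ∉ S := fun h => lt_irrefl m (hlt m h)
    have hSm : S = Iio m := by
      ext j
      refine ⟨fun hj => mem_Iio.2 (hlt j hj), fun hj => ?_⟩
      have hj' : j ∈ insert m S := hS (mem_Iio.1 hj).le (mem_insert_self m S)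
      exact (mem_insert.1 hj').resolve_left (mem_Iio.1 hj).ne
    have hS' : IsLowerSet (S : Set ι) := by rw [hSm, coe_Iio]; exact isLowerSet_Iio m
    rw [sum_insert hm, sum_insert hm, ih hS', hSm, greedyWeight, ← Iio_insert,
      sum_insert notMem_Iio_self]
    ring

end GreedyWeight

theorem sum_mul_le_sum_mul_of_partial_sums_le {ι : Type*} [LinearOrder ι] (s : Finset ι)
    {b : ι → ℝ} (c d : ι → ℝ) (hb : Antitone b) (hb0 : ∀ j ∈ s, 0 ≤ b j)
    (hcd : ∀ k ∈ s, ∑ j ∈ s with j ≤ k, c j ≤ ∑ j ∈ s with j ≤ k, d j) :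
    ∑ j ∈ s, c j * b j ≤ ∑ j ∈ s, d j * b j := by
  induction s using Finset.induction_on_max generalizing b with
  | empty => simp
  | insert m s hlt ih =>
    have hm : m ∉ s := fun h => lt_irrefl m (hlt m h)
    have hsplit : ∀ e : ι → ℝ, ∑ j ∈ insert m s, e j * b j
        = ∑ j ∈ s, e j * (b j - b m) + (∑ j ∈ insert m s, e j) * b m := by
      intro e
      simp only [sum_insert hm, mul_sub, sum_sub_distrib, add_mul, sum_mul]
      ring
    have hfilter : ∀ k ∈ s, {j ∈ insert m s | j ≤ k} = {j ∈ s | j ≤ k} := by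
      intro k hk
      rw [filter_insert, if_neg (not_le.2 (hlt k hk))]
    have htotal : {j ∈ insert m s | j ≤ m} = insert m s :=
      filter_true_of_mem fun j hj => (mem_insert.1 hj).elim le_of_eq fun h => (hlt j h).le
    rw [hsplit c, hsplit d]
    gcongr ?_ + ?_
    · refine ih (fun i j hij => sub_le_sub_right (hb hij) _)
        (fun j hj => sub_nonneg.2 (hb (hlt j hj).le)) fun k hk => ?_
      rw [← hfilter k hk]
      exact hcd k (mem_insert_of_mem hk)
    · refine mul_le_mul_of_nonneg_right ?_ (hb0 m (mem_insert_self m s))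
      rw [← htotal]
      exact hcd m (mem_insert_self m s)

theorem sum_range_min_one_max_zero_sub {s : ℝ} (hs : 0 ≤ s) (n : ℕ) :
    ∑ i ∈ range n, min 1 (max 0 (s - i)) = min (n : ℝ) s := by
  have hstep : ∀ i : ℕ, min 1 (max 0 (s - i)) = min ((i + 1 : ℕ) : ℝ) s - min (i : ℝ) s := by
    intro i
    push_cast
    simp only [min_def, max_def]
    split_ifs <;> linarith
  simp_rw [hstep]
  rw [sum_range_sub (fun i : ℕ => min (i : ℝ) s)]
  simp [hs]

theorem min_add_sub_min_le {c x y h : ℝ} (hyx : y ≤ x) (hh : 0 ≤ h) :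
    min c (x + h) - min c x ≤ min c (y + h) - min c y := by
  simp only [min_def]
  split_ifs <;> linarith

noncomputable def zeroExtend {K : ℕ} (v : Fin K → ℝ) (n : ℕ) : ℝ :=
  if h : n < K then v ⟨n, h⟩ else 0

theorem zeroExtend_succ_le {K : ℕ} {v : Fin K → ℝ} (hv0 : ∀ j, 0 ≤ v j) (hv : Antitone v)
    (n : ℕ) : zeroExtend v (n + 1) ≤ zeroExtend v n := by
  unfold zeroExtend
  split_ifs with h1 h2 h2
  · exact hv (Fin.mk_le_mk.2 n.le_succ)
  · omega
  · exact hv0 _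
  · rfl

section Wstar

variable {K : ℕ} {v : Fin K → ℝ}

theorem wstar_zero : wstar K v 0 = 0 := by
  simp [wstar]

/-- Abel summation writes `w*` as a combination of the concave functions `t ↦ min (n + 1) (t K)`
with coefficients `v n - v (n + 1) ≥ 0`. -/
theorem wstar_eq_sum_min {t : ℝ} (ht : 0 ≤ t) :
    wstar K v t = ∑ n ∈ range K,
      (zeroExtend v n - zeroExtend v (n + 1)) * min ((n : ℝ) + 1) (t * K) := by
  have hs : 0 ≤ t * K := by positivity
  have hwstar : wstar K v t = ∑ n ∈ range (K + 1), zeroExtend v n • min 1 (max 0 (t * K - n)) := by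
    rw [sum_range_succ, wstar, ← Fin.sum_univ_eq_sum_range]
    simp [zeroExtend]
  have hK : zeroExtend v K = 0 := by simp [zeroExtend]
  rw [hwstar, sum_range_by_parts, add_tsub_cancel_right, hK, zero_smul, zero_sub,
    ← sum_neg_distrib]
  refine sum_congr rfl fun n _ => ?_
  rw [sum_range_min_one_max_zero_sub hs, smul_eq_mul]
  push_cast
  ring

theorem decreasingIncrements_wstar (hv0 : ∀ j, 0 ≤ v j) (hv : Antitone v) :
    DecreasingIncrements (wstar K v) := by
  intro x y h hy hyx hh
  rw [wstar_eq_sum_min (by linarith), wstar_eq_sum_min (by linarith),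
    wstar_eq_sum_min (by linarith), wstar_eq_sum_min hy, ← sum_sub_distrib, ← sum_sub_distrib]
  refine sum_le_sum fun n _ => ?_
  rw [← mul_sub, ← mul_sub, add_mul, add_mul]
  exact mul_le_mul_of_nonneg_left
    (min_add_sub_min_le (by gcongr) (by positivity)) (sub_nonneg.2 (zeroExtend_succ_le hv0 hv n))

end Wstar

theorem wowa_ge_fpi_general (K : ℕ) (v p : Fin K → ℝ)
    (hv0 : ∀ j, 0 ≤ v j)
    (hvmono : ∀ i j : Fin K, i ≤ j → v j ≤ v i)
    (hp0 : ∀ j, 0 < p j)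
    (a : Fin K → ℝ) (ha : ∀ j, 0 ≤ a j)
    (σ π : Equiv.Perm (Fin K))
    (hσ : ∀ i j : Fin K, i ≤ j → a (σ j) ≤ a (σ i)) :
    wowaW K v p π a ≤ wowaW K v p σ a := by
  have hF := decreasingIncrements_wstar hv0 fun i j h => hvmono i j h
  have hweight (τ : Equiv.Perm (Fin K)) :
      wowaWeight K v p τ = greedyWeight (wstar K v) (p ∘ τ) := rfl
  set e := σ.trans π.symm
  have hreindex : wowaW K v p π a = ∑ k, wowaWeight K v p π (e k) * a (σ k) := by
    rw [wowaW, ← e.sum_comp]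
    simp [e]
  rw [hreindex, wowaW]
  refine sum_mul_le_sum_mul_of_partial_sums_le univ _ _ (fun i j h => hσ i j h)
    (fun j _ => ha _) fun k _ => ?_
  rw [filter_ge_eq_Iic]
  calc ∑ j ∈ Iic k, wowaWeight K v p π (e j)
      = ∑ j ∈ (Iic k).map e.toEmbedding, greedyWeight (wstar K v) (p ∘ π) j := by
        rw [sum_map, hweight]
        rfl
    _ ≤ wstar K v (∑ j ∈ (Iic k).map e.toEmbedding, p (π j)) :=
        sum_greedyWeight_le wstar_zero hF (fun i => (hp0 _).le) _
    _ = wstar K v (∑ j ∈ Iic k, p (σ j)) := by simp [e]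
    _ = ∑ j ∈ Iic k, wowaWeight K v p σ j := by
        rw [hweight]
        exact (sum_greedyWeight_of_isLowerSet wstar_zero (by simpa using isLowerSet_Iic k)).symm

/-- Lemma 1: the nonincreasing ordering maximizes the
WOWA-type weighted sum: wowa(a) ≥ f_π(a) for any permutation π. -/
theorem wowa_ge_fpi (K : ℕ) (v p : Fin K → ℝ)
    (hv0 : ∀ j, 0 ≤ v j) (hvs : ∑ j, v j = 1)
    (hvmono : ∀ i j : Fin K, i ≤ j → v j ≤ v i)
    (hp0 : ∀ j, 0 < p j) (hps : ∑ j, p j = 1)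
    (a : Fin K → ℝ) (ha : ∀ j, 0 ≤ a j)
    (σ π : Equiv.Perm (Fin K))
    (hσ : ∀ i j : Fin K, i ≤ j → a (σ j) ≤ a (σ i)) :
    wowaW K v p π a ≤ wowaW K v p σ a :=
  wowa_ge_fpi_general K v p hv0 hvmono hp0 a ha σ π hσ
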